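/- For every even q ≥ 2 and every 3-uniform hypergraph G not in U, r(G;q) > 2^{2^{q/2}}. -/

import Mathlib

/-- A 3-uniform hypergraph with vertices drawn from ℕ. -/
structure ThreeGraph where
  verts : Finset ℕ
  edges : Finset (Finset ℕ)
  edge_card : ∀ e ∈ edges, e.card = 3
  edge_sub : ∀ e ∈ edges, e ⊆ verts

/-- A 3-graph is tripartite if its vertex set can be partitioned into three parts so that
every edge has exactly one vertex in each part. -/
def Tripartite (G : ThreeGraph) : Prop :=
  ∃ V1 V2 V3 : Finset ℕ,
    Disjoint V1 V2 ∧ Disjoint V1 V3 ∧ Disjoint V2 V3 ∧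
    V1 ∪ V2 ∪ V3 = G.verts ∧
    ∀ e ∈ G.edges, (e ∩ V1).card = 1 ∧ (e ∩ V2).card = 1 ∧ (e ∩ V3).card = 1

/-- Membership in the family 𝒰₁: there is a vertex subset intersecting every edge in
exactly one vertex. -/
def InU1 (G : ThreeGraph) : Prop :=
  ∃ W : Finset ℕ, W ⊆ G.verts ∧ ∀ e ∈ G.edges, (e ∩ W).card = 1

/-- `Reducible G H F` : `G` is reducible to the pair `(H, F)` by collapsing a collapsible
set `U` (with `F = G[U]`), where the new vertex of `H` is `v`. -/
def Reducible (G H F : ThreeGraph) : Prop :=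
  ∃ (U : Finset ℕ) (v : ℕ),
    U ⊆ G.verts ∧ 2 ≤ U.card ∧ U.card < G.verts.card ∧
    (∀ e ∈ G.edges, (e ∩ U).card ≠ 2) ∧
    v ∉ G.verts ∧
    H.verts = (G.verts \ U) ∪ {v} ∧
    H.edges = G.edges.filter (fun e => e ∩ U = ∅) ∪
      (G.edges.filter (fun e => (e ∩ U).card = 1)).image (fun e => (e \ U) ∪ {v}) ∧
    F.verts = U ∧
    F.edges = G.edges.filter (fun e => e ⊆ U)

/-- `MemU i G` means `G ∈ 𝒰ᵢ`: `𝒰₀` is the family of tripartite 3-graphs, `𝒰₁` of 3-graphs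
with a vertex set meeting every edge exactly once, the families are nested, and for `i ≥ 2`,
`G ∈ 𝒰ᵢ` whenever `G` is reducible to `(H, F)` with `H ∈ 𝒰ᵢ₋₁` and `F ∈ 𝒰ᵢ`. -/
inductive MemU : ℕ → ThreeGraph → Prop where
  | zero (G : ThreeGraph) : Tripartite G → MemU 0 G
  | one (G : ThreeGraph) : InU1 G → MemU 1 G
  | mono (i : ℕ) (G : ThreeGraph) : MemU i G → MemU (i + 1) G
  | reduce (i : ℕ) (G H F : ThreeGraph) :
      Reducible G H F → MemU (i + 1) H → MemU (i + 2) F → MemU (i + 2) G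

/-- `G ∈ 𝒰 = ⋃ᵢ 𝒰ᵢ`. -/
def InU (G : ThreeGraph) : Prop := ∃ i, MemU i G

/-- A monochromatic copy of `G` in color `i` under the coloring `χ` of the triples of
`Fin N`. -/
def MonoCopy {N q : ℕ} (χ : Finset (Fin N) → Fin q) (i : Fin q) (G : ThreeGraph) : Prop :=
  ∃ f : ℕ → Fin N, Set.InjOn f ↑G.verts ∧ ∀ e ∈ G.edges, χ (e.image f) = i

/-- `N` vertices suffice to find, in any `q`-coloring, a monochromatic copy of `Gs i` in
color `i` for some `i`. -/
def RamseyProp {q : ℕ} (Gs : Fin q → ThreeGraph) (N : ℕ) : Prop :=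
  ∀ χ : Finset (Fin N) → Fin q, ∃ i : Fin q, MonoCopy χ i (Gs i)

/-- The Ramsey number `r(G₁, …, G_q)`. -/
noncomputable def ramseyNumber {q : ℕ} (Gs : Fin q → ThreeGraph) : ℕ :=
  sInf {N | RamseyProp Gs N}

/-- The `q`-color Ramsey number `r(G; q)`. -/
noncomputable def rq (G : ThreeGraph) (q : ℕ) : ℕ :=
  ramseyNumber (fun _ : Fin q => G)

/-!
Stepping up. Cut `[0, n²)` into `n` blocks of `n` consecutive integers. A triple meeting exactly
two blocks has a lone vertex, below or above the other two; these two shapes get two fresh colours.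
A triple inside one block inherits the colour of its positions in `[0, n)`, a triple meeting three
blocks the colour of its three blocks. Starting from `n = 2`, where there are no triples, `t` steps
colour the triples of `[0, 2 ^ 2 ^ t)` with `2t` colours.

Every monochromatic 3-graph lies in `𝒰`. For a lone-vertex colour, the vertices below the top level
meet every edge in one or three vertices: collapsing them leaves a graph in `𝒰₁`, and the collapsed
set is handled by induction. For an inherited colour, collapse a block containing at least two
vertices: the block is in `𝒰` by induction on the number of steps, and the collapsed graph has the
same shape with fewer vertices. So `G ∉ 𝒰` has no monochromatic copy and `r(G; q) > 2 ^ 2 ^ ⌊q/2⌋`;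
that `r(G; q)` is finite at all is the hypergraph Ramsey theorem, proved via end-homogeneous sets.
-/

open Finset

lemma MemU.of_le {i j : ℕ} {G : ThreeGraph} (h : MemU i G) (hij : i ≤ j) : MemU j G := by
  induction j, hij using Nat.le_induction with
  | base => exact h
  | succ n _ ih => exact MemU.mono n G ih

lemma InU.of_reducible {G H F : ThreeGraph} (hred : Reducible G H F) (hH : InU H) (hF : InU F) :
    InU G := by
  obtain ⟨a, ha⟩ := hH
  obtain ⟨b, hb⟩ := hF
  exact ⟨max a b + 2, .reduce _ G H F hred (ha.of_le (by omega)) (hb.of_le (by omega))⟩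

lemma InU.of_edges_eq_empty {G : ThreeGraph} (h : G.edges = ∅) : InU G :=
  ⟨0, .zero G ⟨G.verts, ∅, ∅, by simp, by simp, by simp, by simp, by simp [h]⟩⟩

lemma InU.of_inU1 {G : ThreeGraph} (h : InU1 G) : InU G := ⟨1, .one G h⟩

namespace ThreeGraph

variable (G : ThreeGraph) (U : Finset ℕ)

lemma nonempty_verts_of_mem_edges {e : Finset ℕ} (he : e ∈ G.edges) : G.verts.Nonempty :=
  (card_pos.mp (by rw [G.edge_card e he]; omega)).mono (G.edge_sub e he)

def fresh : ℕ := G.verts.sup id + 1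

lemma fresh_notMem : G.fresh ∉ G.verts := fun h => by
  have := le_sup (f := id) h
  simp only [fresh, id] at this
  omega

def induce : ThreeGraph where
  verts := U
  edges := G.edges.filter (· ⊆ U)
  edge_card e he := G.edge_card e (mem_filter.mp he).1
  edge_sub _ he := (mem_filter.mp he).2

lemma card_sdiff_union_fresh {e : Finset ℕ} (he : e ∈ G.edges) (h : (e ∩ U).card = 1) :
    (e \ U ∪ {G.fresh}).card = 3 := by
  have hfresh : G.fresh ∉ e \ U := fun h' => G.fresh_notMem (G.edge_sub e he (mem_sdiff.mp h').1)
  rw [card_union_of_disjoint (disjoint_singleton_right.mpr hfresh), card_singleton,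
    ← sdiff_inter_self_left, card_sdiff_of_subset inter_subset_left, h, G.edge_card e he]

def collapse : ThreeGraph where
  verts := G.verts \ U ∪ {G.fresh}
  edges := G.edges.filter (fun e => e ∩ U = ∅) ∪
    (G.edges.filter (fun e => (e ∩ U).card = 1)).image (fun e => e \ U ∪ {G.fresh})
  edge_card e' he' := by
    rcases mem_union.mp he' with h | h
    · exact G.edge_card e' (mem_filter.mp h).1
    · obtain ⟨e, he, rfl⟩ := mem_image.mp h
      exact G.card_sdiff_union_fresh U (mem_filter.mp he).1 (mem_filter.mp he).2
  edge_sub e' he' := by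
    rcases mem_union.mp he' with h | h
    · obtain ⟨he, hU⟩ := mem_filter.mp h
      exact fun u hu => mem_union_left _ (mem_sdiff.mpr ⟨G.edge_sub e' he hu,
        fun huU => (eq_empty_iff_forall_notMem.mp hU) u (mem_inter.mpr ⟨hu, huU⟩)⟩)
    · obtain ⟨e, he, rfl⟩ := mem_image.mp h
      exact union_subset_union (sdiff_subset_sdiff (G.edge_sub e (mem_filter.mp he).1) le_rfl)
        le_rfl

variable {G U}

lemma mem_collapse_edges {e' : Finset ℕ} : e' ∈ (G.collapse U).edges ↔
    (e' ∈ G.edges ∧ e' ∩ U = ∅) ∨ ∃ e ∈ G.edges, (e ∩ U).card = 1 ∧ e \ U ∪ {G.fresh} = e' := by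
  simp [collapse, and_assoc]

lemma inU1_collapse (h : ∀ e ∈ G.edges, e ∩ U ≠ ∅) : InU1 (G.collapse U) := by
  refine ⟨{G.fresh}, by simp [collapse], fun e' he' => ?_⟩
  rcases mem_collapse_edges.mp he' with ⟨he, hU⟩ | ⟨_, -, -, rfl⟩
  · exact absurd hU (h e' he)
  · simp

lemma inU_of_collapse (hUsub : U ⊆ G.verts) (hU2 : 2 ≤ U.card) (hUlt : U.card < G.verts.card)
    (hcoll : ∀ e ∈ G.edges, (e ∩ U).card ≠ 2) (hH : InU (G.collapse U)) (hF : InU (G.induce U)) :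
    InU G :=
  hH.of_reducible ⟨U, G.fresh, hUsub, hU2, hUlt, hcoll, G.fresh_notMem, rfl, rfl, rfl, rfl⟩ hF

end ThreeGraph

def HasLoneLowVertex {α β : Type*} [LinearOrder β] (g : α → β) (T : Finset α) : Prop :=
  ∃ w ∈ T, ∀ u ∈ T, u ≠ w → g w < g u ∧ ∀ u' ∈ T, u' ≠ w → g u' = g u

lemma HasLoneLowVertex.card_filter_lt {α β : Type*} [LinearOrder β] {g : α → β} {e : Finset α}
    (h : HasLoneLowVertex g e) (he : e.card = 3) {M : β} (hM : ∀ x ∈ e, g x ≤ M) :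
    (e.filter (g · < M)).card = 3 ∨ (e.filter (g · < M)).card = 1 := by
  classical
  obtain ⟨w, hw, hlone⟩ := h
  obtain ⟨u, hu⟩ : (e.erase w).Nonempty := card_pos.mp (by rw [card_erase_of_mem hw]; omega)
  obtain ⟨huw, hue⟩ := mem_erase.mp hu
  obtain ⟨hwu, hlevel⟩ := hlone u hue huw
  rcases (hM u hue).lt_or_eq with hlt | heq
  · refine .inl (he ▸ congrArg card (filter_true_of_mem fun x hx => ?_))
    by_cases hxw : x = w
    · exact hxw ▸ hwu.trans hlt
    · exact (hlevel x hx hxw).trans_lt hlt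
  · refine .inr (card_eq_one.mpr ⟨w, eq_singleton_iff_unique_mem.mpr
      ⟨mem_filter.mpr ⟨hw, heq ▸ hwu⟩, fun x hx => ?_⟩⟩)
    obtain ⟨hx, hxM⟩ := mem_filter.mp hx
    by_contra hxw
    exact hxM.ne (hlevel x hx hxw ▸ heq)

theorem inU_of_hasLoneLowVertex {β : Type*} [LinearOrder β] (g : ℕ → β) (G : ThreeGraph)
    (hG : ∀ e ∈ G.edges, HasLoneLowVertex g e) : InU G := by
  induction h : G.verts.card using Nat.strong_induction_on generalizing G with
  | _ n ih =>
  rcases G.verts.eq_empty_or_nonempty with hV | hV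
  · exact .of_edges_eq_empty (eq_empty_of_forall_notMem fun e he =>
      (G.nonempty_verts_of_mem_edges he).ne_empty hV)
  obtain ⟨v, hv, hmax⟩ := G.verts.exists_max_image g hV
  set U := G.verts.filter (fun u => g u < g v)
  have hcard : ∀ e ∈ G.edges, (e ∩ U).card = 3 ∨ (e ∩ U).card = 1 := fun e he => by
    rw [inter_filter, inter_eq_left.mpr (G.edge_sub e he)]
    exact (hG e he).card_filter_lt (G.edge_card e he) fun x hx => hmax x (G.edge_sub e he hx)
  by_cases hU : U.card ≤ 1
  · refine .of_inU1 ⟨U, filter_subset _ _, fun e he => ?_⟩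
    have := hcard e he
    have := card_le_card (inter_subset_right (s₁ := e) (s₂ := U))
    omega
  have hUlt : U.card < n := h ▸ card_lt_card ⟨filter_subset _ _, fun hsub => by
    simpa using mem_filter.mp (hsub hv)⟩
  refine G.inU_of_collapse (U := U) (filter_subset _ _) (by omega) (h ▸ hUlt)
    (fun e he => by have := hcard e he; omega)
    (.of_inU1 (G.inU1_collapse fun e he => ?_))
    (ih _ hUlt (G.induce U) (fun e he => hG e (mem_filter.mp he).1) rfl)
  rw [← nonempty_iff_ne_empty, ← card_pos]
  have := hcard e he
  omega

lemma HasLoneLowVertex.of_image {α β : Type*} [LinearOrder β] {g : ℕ → β} {ℓ : α → ℕ}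
    {e : Finset α} (hℓ : Set.InjOn ℓ e) (h : HasLoneLowVertex g (e.image ℓ)) :
    HasLoneLowVertex (g ∘ ℓ) e := by
  obtain ⟨_, hw, hlone⟩ := h
  obtain ⟨w, hwe, rfl⟩ := mem_image.mp hw
  have hne : ∀ u ∈ e, u ≠ w → ℓ u ≠ ℓ w := fun u hu huw h => huw (hℓ hu hwe h)
  exact ⟨w, hwe, fun u hu huw => ⟨(hlone _ (mem_image_of_mem ℓ hu) (hne u hu huw)).1,
    fun u' hu' hu'w => (hlone _ (mem_image_of_mem ℓ hu) (hne u hu huw)).2 _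
      (mem_image_of_mem ℓ hu') (hne u' hu' hu'w)⟩⟩

/-- Applied to a colour class: every monochromatic 3-graph of that colour is in `𝒰`. -/
def IsUClass (𝒞 : Set (Finset ℕ)) : Prop :=
  ∀ (G : ThreeGraph) (ℓ : ℕ → ℕ), Set.InjOn ℓ G.verts → (∀ e ∈ G.edges, e.image ℓ ∈ 𝒞) → InU G

lemma IsUClass.mono {𝒞 𝒟 : Set (Finset ℕ)} (h : 𝒞 ⊆ 𝒟) (h𝒟 : IsUClass 𝒟) : IsUClass 𝒞 :=
  fun G ℓ hℓ hG => h𝒟 G ℓ hℓ fun e he => h (hG e he)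

lemma isUClass_empty : IsUClass ∅ :=
  fun _ _ _ hG => .of_edges_eq_empty (eq_empty_of_forall_notMem hG)

lemma isUClass_hasLoneLowVertex {β : Type*} [LinearOrder β] (g : ℕ → β) :
    IsUClass {T | HasLoneLowVertex g T} := fun G ℓ hℓ hG =>
  inU_of_hasLoneLowVertex (g ∘ ℓ) G fun e he =>
    (hG e he).of_image (hℓ.mono (coe_subset.mpr (G.edge_sub e he)))

/-- `x` is read as the position `x % n` inside the block `x / n`. -/
def lexClass (n : ℕ) (𝒞 : Set (Finset ℕ)) : Set (Finset ℕ) :=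
  {T | (T.image (· / n)).card = 1 ∧ T.image (· % n) ∈ 𝒞 ∨
    (T.image (· / n)).card = 3 ∧ T.image (· / n) ∈ 𝒞}

@[simp] lemma lexClass_empty (n : ℕ) : lexClass n ∅ = ∅ := by simp [lexClass]

section Lex

variable {𝒞 : Set (Finset ℕ)} {n : ℕ} {G : ThreeGraph} {ℓ : ℕ → ℕ}

lemma lexClass_image_cases {e : Finset ℕ} (h : e.image ℓ ∈ lexClass n 𝒞) :
    (∃ b, ∀ u ∈ e, ℓ u / n = b) ∨
      ((e.image ℓ).image (· / n)).card = 3 ∧ (e.image ℓ).image (· / n) ∈ 𝒞 := by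
  refine h.imp_left fun h1 => ?_
  obtain ⟨b, hb⟩ := card_eq_one.mp h1.1
  exact ⟨b, fun u hu => mem_singleton.mp (hb ▸ mem_image_of_mem _ (mem_image_of_mem ℓ hu))⟩

lemma inU_of_forall_div_eq (h𝒞 : IsUClass 𝒞) (hℓ : Set.InjOn ℓ G.verts)
    (hG : ∀ e ∈ G.edges, e.image ℓ ∈ lexClass n 𝒞) {a : ℕ} (ha : ∀ u ∈ G.verts, ℓ u / n = a) :
    InU G := by
  refine h𝒞 G (fun u => ℓ u % n) (fun u hu v hv huv => hℓ hu hv ?_) fun e he => ?_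
  · rw [← Nat.div_add_mod (ℓ u) n, ← Nat.div_add_mod (ℓ v) n, ha u hu, ha v hv]
    exact congrArg (n * a + ·) huv
  rcases hG e he with ⟨-, h⟩ | ⟨h3, -⟩
  · rwa [image_image] at h
  · have : (e.image ℓ).image (· / n) ⊆ {a} := by
      simpa [subset_iff] using fun u hu => ha u (G.edge_sub e he hu)
    have := card_le_card this
    simp_all

lemma inU_of_injOn_div (h𝒞 : IsUClass 𝒞) (hG : ∀ e ∈ G.edges, e.image ℓ ∈ lexClass n 𝒞)
    (hinj : Set.InjOn (fun u => ℓ u / n) G.verts) : InU G := by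
  refine h𝒞 G (fun u => ℓ u / n) hinj fun e he => ?_
  rcases hG e he with ⟨h1, -⟩ | ⟨-, h⟩
  · simp only [image_image, Function.comp_def] at h1
    rw [card_image_of_injOn (hinj.mono (coe_subset.mpr (G.edge_sub e he))),
      G.edge_card e he] at h1
    omega
  · rwa [image_image] at h

lemma card_inter_block_ne_two (hG : ∀ e ∈ G.edges, e.image ℓ ∈ lexClass n 𝒞) (a : ℕ)
    {e : Finset ℕ} (he : e ∈ G.edges) :
    (e ∩ G.verts.filter (fun u => ℓ u / n = a)).card ≠ 2 := by
  have hsub := G.edge_sub e he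
  rcases lexClass_image_cases (hG e he) with ⟨b, hb⟩ | ⟨h3, -⟩
  · by_cases hba : b = a
    · rw [inter_eq_left.mpr fun u hu => mem_filter.mpr ⟨hsub hu, hba ▸ hb u hu⟩, G.edge_card e he]
      omega
    · rw [disjoint_iff_inter_eq_empty.mp (disjoint_left.mpr fun u hu hu' =>
        hba (hb u hu ▸ (mem_filter.mp hu').2)), card_empty]
      omega
  · rw [image_image, ← G.edge_card e he] at h3
    have hinj := card_image_iff.mp h3
    have : (e ∩ G.verts.filter (fun u => ℓ u / n = a)).card ≤ 1 := card_le_one.mpr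
      fun u hu v hv => hinj (mem_inter.mp hu).1 (mem_inter.mp hv).1
        (((mem_filter.mp (mem_inter.mp hu).2).2).trans (mem_filter.mp (mem_inter.mp hv).2).2.symm)
    omega

lemma injOn_update_fresh (hℓ : Set.InjOn ℓ G.verts) {U : Finset ℕ} (hU : U ⊆ G.verts)
    {u₀ : ℕ} (hu₀ : u₀ ∈ U) :
    Set.InjOn (Function.update ℓ G.fresh (ℓ u₀)) (G.collapse U).verts := by
  have hold : ∀ u ∈ G.verts \ U, Function.update ℓ G.fresh (ℓ u₀) u = ℓ u := fun u hu =>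
    Function.update_of_ne (ne_of_mem_of_not_mem (mem_sdiff.mp hu).1 G.fresh_notMem) _ _
  have hfresh : ∀ u ∈ G.verts \ U, ℓ u ≠ ℓ u₀ := fun u hu h =>
    (mem_sdiff.mp hu).2 (hℓ (mem_sdiff.mp hu).1 (hU hu₀) h ▸ hu₀)
  intro u hu v hv huv
  simp only [ThreeGraph.collapse, mem_coe, mem_union, mem_singleton] at hu hv
  rcases hu with hu | rfl <;> rcases hv with hv | rfl
  · rw [hold u hu, hold v hv] at huv
    exact hℓ (mem_sdiff.mp hu).1 (mem_sdiff.mp hv).1 huv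
  · exact absurd (by simpa [hold u hu] using huv) (hfresh u hu)
  · exact absurd (by simpa [hold v hv] using huv.symm) (hfresh v hv)
  · rfl

lemma image_update_fresh_mem_lexClass (hG : ∀ e ∈ G.edges, e.image ℓ ∈ lexClass n 𝒞)
    {a u₀ : ℕ} (hu₀ : u₀ ∈ G.verts.filter (fun u => ℓ u / n = a)) :
    ∀ e' ∈ (G.collapse (G.verts.filter (fun u => ℓ u / n = a))).edges,
      e'.image (Function.update ℓ G.fresh (ℓ u₀)) ∈ lexClass n 𝒞 := by
  set U := G.verts.filter (fun u => ℓ u / n = a)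
  have himage : ∀ s ⊆ G.verts, s.image (Function.update ℓ G.fresh (ℓ u₀)) = s.image ℓ :=
    fun s hs => image_congr fun u hu =>
      Function.update_of_ne (ne_of_mem_of_not_mem (hs hu) G.fresh_notMem) _ _
  intro e' he'
  rcases ThreeGraph.mem_collapse_edges.mp he' with ⟨he, -⟩ | ⟨e, he, h1, rfl⟩
  · rw [himage e' (G.edge_sub e' he)]
    exact hG e' he
  have hsub := G.edge_sub e he
  obtain ⟨x, hx⟩ : (e ∩ U).Nonempty := card_pos.mp (by omega)
  have hxa : ℓ x / n = a := (mem_filter.mp (mem_inter.mp hx).2).2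
  rcases lexClass_image_cases (hG e he) with ⟨b, hb⟩ | hT
  · have : e ∩ U = e := inter_eq_left.mpr fun u hu =>
      mem_filter.mpr ⟨hsub hu, (hb u hu).trans ((hb x (mem_inter.mp hx).1).symm.trans hxa)⟩
    rw [this, G.edge_card e he] at h1
    omega
  have hblock : ((e ∩ U).image ℓ).image (· / n) = {a} := by
    rw [image_image]
    exact (image_congr fun u hu => (mem_filter.mp (mem_inter.mp hu).2).2).trans
      (image_const ⟨x, hx⟩ a)
  right
  rw [image_union, image_singleton, Function.update_self, himage _ (sdiff_subset.trans hsub),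
    image_union, image_singleton, (mem_filter.mp hu₀).2, ← hblock, ← image_union, ← image_union,
    sdiff_union_inter]
  exact hT

theorem IsUClass.lex (h𝒞 : IsUClass 𝒞) (n : ℕ) : IsUClass (lexClass n 𝒞) := by
  intro G ℓ hℓ hG
  induction h : G.verts.card using Nat.strong_induction_on generalizing G ℓ with
  | _ m ih =>
  by_cases hblock : ∃ a, 2 ≤ (G.verts.filter (fun u => ℓ u / n = a)).card
  · obtain ⟨a, ha⟩ := hblock
    set U := G.verts.filter (fun u => ℓ u / n = a)
    have hUa : ∀ u ∈ U, ℓ u / n = a := fun u hu => (mem_filter.mp hu).2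
    by_cases hUlt : U.card < G.verts.card
    · obtain ⟨u₀, hu₀⟩ : U.Nonempty := card_pos.mp (by omega)
      refine G.inU_of_collapse (U := U) (filter_subset _ _) ha hUlt
        (fun e he => card_inter_block_ne_two hG a he) ?_
        (inU_of_forall_div_eq h𝒞 (hℓ.mono (coe_subset.mpr (filter_subset _ _)))
          (fun e he => hG e (mem_filter.mp he).1) hUa)
      -- the collapsed vertex inherits the label of `u₀`, hence lies in block `a`
      refine ih _ ?_ (G.collapse U) _ (injOn_update_fresh hℓ (filter_subset _ _) hu₀)
        (image_update_fresh_mem_lexClass hG hu₀) rfl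
      have hsd : (G.verts \ U).card = G.verts.card - U.card :=
        card_sdiff_of_subset (filter_subset _ _)
      have := card_union_le (G.verts \ U) {G.fresh}
      rw [card_singleton] at this
      exact h ▸ this.trans_lt (by omega)
    · have hUV : U = G.verts := eq_of_subset_of_card_le (filter_subset _ _) (not_lt.mp hUlt)
      exact inU_of_forall_div_eq h𝒞 hℓ hG (hUV ▸ hUa)
  · simp only [not_exists, not_le] at hblock
    refine inU_of_injOn_div h𝒞 hG fun u hu v hv huv => ?_
    by_contra hne
    have := card_le_card (s := {u, v}) (t := G.verts.filter (fun w => ℓ w / n = ℓ u / n))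
      (by simp [insert_subset_iff, mem_coe.mp hu, mem_coe.mp hv, huv.symm])
    rw [card_pair hne] at this
    exact absurd (hblock (ℓ u / n)) (by omega)

end Lex

lemma hasLoneLowVertex_or_of_eq {α β : Type*} [LinearOrder β] [DecidableEq α] {f : α → β}
    {a b c : α} (hab : f a = f b) (hc : f c ≠ f a) :
    HasLoneLowVertex f {a, b, c} ∨ HasLoneLowVertex (OrderDual.toDual ∘ f) {a, b, c} := by
  have hpair : ∀ u ∈ ({a, b, c} : Finset α), u ≠ c → f u = f a := by
    simp only [mem_insert, mem_singleton]
    rintro u (rfl | rfl | rfl) huc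
    exacts [rfl, hab.symm, absurd rfl huc]
  rcases hc.lt_or_gt with hlt | hgt
  · exact .inl ⟨c, by simp, fun u hu huc => ⟨hpair u hu huc ▸ hlt,
      fun u' hu' hu'c => by rw [hpair u hu huc, hpair u' hu' hu'c]⟩⟩
  · refine .inr ⟨c, by simp, fun u hu huc => ⟨?_, fun u' hu' hu'c => ?_⟩⟩
    · simpa [hpair u hu huc] using hgt
    · simp [hpair u hu huc, hpair u' hu' hu'c]

lemma card_image_eq_three_of_not_hasLoneLowVertex {α β : Type*} [LinearOrder β] [DecidableEq α]
    {f : α → β} {T : Finset α} (hT : T.card = 3) (h1 : (T.image f).card ≠ 1)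
    (hlow : ¬HasLoneLowVertex f T) (hhigh : ¬HasLoneLowVertex (OrderDual.toDual ∘ f) T) :
    (T.image f).card = 3 := by
  obtain ⟨a, b, c, hab, hac, hbc, rfl⟩ := card_eq_three.mp hT
  have hlone : ∀ {x y z : α}, ({x, y, z} : Finset α) = {a, b, c} → f x = f y → f z = f x := by
    intro x y z hxyz hxy
    by_contra hz
    rw [← hxyz] at hlow hhigh
    exact (hasLoneLowVertex_or_of_eq hxy hz).elim hlow hhigh
  have hconst : ∀ x, f a = x → f b = x → f c = x → (image f {a, b, c}).card = 1 := by
    rintro _ rfl hb hc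
    simp [hb, hc]
  by_cases hab' : f a = f b
  · exact absurd (hconst _ rfl hab'.symm (hlone rfl hab')) h1
  by_cases hac' : f a = f c
  · exact absurd (hconst _ rfl (hlone (by ext; simp only [mem_insert, mem_singleton]; tauto) hac')
      hac'.symm) h1
  by_cases hbc' : f b = f c
  · exact absurd (hconst (f b) (hlone (by ext; simp only [mem_insert, mem_singleton]; tauto) hbc')
      rfl hbc'.symm) h1
  simp [card_insert_of_notMem, hab', hac', hbc']

open Classical in
/-- A lone high vertex is a lone low vertex for the reversed order `ℕᵒᵈ`. -/
noncomputable def stepUpColor : ℕ → Finset ℕ → ℕ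
  | 0, _ => 0
  | k + 1, T =>
    if HasLoneLowVertex (· / 2 ^ 2 ^ k) T then 0
    else if HasLoneLowVertex (fun x => OrderDual.toDual (x / 2 ^ 2 ^ k)) T then 1
    else if (T.image (· / 2 ^ 2 ^ k)).card = 1 then stepUpColor k (T.image (· % 2 ^ 2 ^ k)) + 2
    else stepUpColor k (T.image (· / 2 ^ 2 ^ k)) + 2

def colorClass (k c : ℕ) : Set (Finset ℕ) :=
  {T | T.card = 3 ∧ T ⊆ range (2 ^ 2 ^ k) ∧ stepUpColor k T = c}

section ColorClass

variable {k c : ℕ}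

lemma colorClass_succ_zero :
    colorClass (k + 1) 0 ⊆ {T | HasLoneLowVertex (· / 2 ^ 2 ^ k) T} := by
  rintro T ⟨-, -, hT⟩
  unfold stepUpColor at hT
  split_ifs at hT with h
  exact h

lemma colorClass_succ_one :
    colorClass (k + 1) 1 ⊆
      {T | HasLoneLowVertex (fun x => OrderDual.toDual (x / 2 ^ 2 ^ k)) T} := by
  rintro T ⟨-, -, hT⟩
  unfold stepUpColor at hT
  split_ifs at hT with h h' <;> first | exact h' | omega

lemma colorClass_succ_add_two :
    colorClass (k + 1) (c + 2) ⊆ lexClass (2 ^ 2 ^ k) (colorClass k c) := by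
  rintro T ⟨hT3, hTr, hT⟩
  have hpos : 0 < 2 ^ 2 ^ k := by positivity
  have hlt : ∀ x ∈ T, x < 2 ^ 2 ^ k * 2 ^ 2 ^ k := fun x hx => by
    have := mem_range.mp (hTr hx)
    rwa [pow_succ, pow_mul, sq] at this
  have hlow : ¬HasLoneLowVertex (· / 2 ^ 2 ^ k) T := fun h => by
    rw [stepUpColor, if_pos h] at hT
    omega
  have hhigh : ¬HasLoneLowVertex (fun x => OrderDual.toDual (x / 2 ^ 2 ^ k)) T := fun h => by
    rw [stepUpColor, if_neg hlow, if_pos h] at hT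
    omega
  rw [stepUpColor, if_neg hlow, if_neg hhigh] at hT
  split_ifs at hT with h1
  · refine .inl ⟨h1, ?_, fun y hy => ?_, Nat.add_right_cancel hT⟩
    · obtain ⟨b, hb⟩ := card_eq_one.mp h1
      have hdiv : ∀ x ∈ T, x / 2 ^ 2 ^ k = b := fun x hx =>
        mem_singleton.mp (hb ▸ mem_image_of_mem _ hx)
      rw [card_image_of_injOn fun x hx y hy hxy => ?_, hT3]
      rw [← Nat.div_add_mod x (2 ^ 2 ^ k), ← Nat.div_add_mod y (2 ^ 2 ^ k), hdiv x hx, hdiv y hy]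
      exact congrArg _ hxy
    · obtain ⟨x, -, rfl⟩ := mem_image.mp hy
      exact mem_range.mpr (Nat.mod_lt _ hpos)
  · have h3 := card_image_eq_three_of_not_hasLoneLowVertex hT3 h1 hlow hhigh
    refine .inr ⟨h3, h3, fun y hy => ?_, Nat.add_right_cancel hT⟩
    obtain ⟨x, hx, rfl⟩ := mem_image.mp hy
    exact mem_range.mpr (Nat.div_lt_of_lt_mul (hlt x hx))

lemma colorClass_eq_empty (h : 2 * k ≤ c) : colorClass k c = ∅ := by
  induction k generalizing c with
  | zero =>
    refine Set.eq_empty_of_forall_notMem fun T ⟨hT3, hTr, _⟩ => ?_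
    have := card_le_card hTr
    simp_all
  | succ k ih =>
    obtain ⟨c, rfl⟩ : ∃ c', c = c' + 2 := ⟨c - 2, by omega⟩
    exact Set.subset_eq_empty colorClass_succ_add_two (by rw [ih (by omega), lexClass_empty])

end ColorClass

theorem isUClass_colorClass (k c : ℕ) : IsUClass (colorClass k c) := by
  induction k generalizing c with
  | zero => exact isUClass_empty.mono (colorClass_eq_empty (by omega)).le
  | succ k ih =>
    match c with
    | 0 => exact (isUClass_hasLoneLowVertex _).mono colorClass_succ_zero
    | 1 => exact (isUClass_hasLoneLowVertex _).mono colorClass_succ_one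
    | c + 2 => exact ((ih c).lex _).mono colorClass_succ_add_two

section Ramsey

variable {C : Type*}

def IsMonochromatic {α : Type*} (χ : Finset α → C) (r : ℕ) (K : Finset α) : Prop :=
  ∃ c, ∀ B ⊆ K, B.card = r → χ B = c

def IsEndHomogeneous {α : Type*} [LinearOrder α] (χ : Finset α → C) (r : ℕ) (T : Finset α) :
    Prop :=
  ∀ x ∈ T, ∀ A ⊆ T, ∀ B ⊆ T, A.card = r → B.card = r → (∀ a ∈ A, x < a) → (∀ b ∈ B, x < b) →
    χ (insert x A) = χ (insert x B)

def HasRamseyBound (C : Type*) (r s N : ℕ) : Prop :=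
  ∀ {α : Type} [LinearOrder α] (χ : Finset α → C) (S : Finset α), N ≤ S.card →
    ∃ K ⊆ S, s ≤ K.card ∧ IsMonochromatic χ r K

lemma exists_isEndHomogeneous {r : ℕ} (hR : ∀ s, ∃ N, HasRamseyBound C r s N) (m : ℕ) :
    ∃ N, ∀ {α : Type} [LinearOrder α] (χ : Finset α → C) (S : Finset α), N ≤ S.card →
      ∃ T ⊆ S, m ≤ T.card ∧ IsEndHomogeneous χ r T := by
  induction m with
  | zero => exact ⟨0, fun χ S _ => ⟨∅, empty_subset S, le_rfl, by simp [IsEndHomogeneous]⟩⟩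
  | succ m ih =>
    obtain ⟨M, hM⟩ := ih
    obtain ⟨N, hN⟩ := hR M
    refine ⟨N + 1, fun {α} _ χ S hS => ?_⟩
    have hSne : S.Nonempty := card_pos.mp (by omega)
    set x₀ := S.min' hSne
    have hS' : N ≤ (S.erase x₀).card := by rw [card_erase_of_mem (S.min'_mem hSne)]; omega
    obtain ⟨K, hKS, hKcard, c, hc⟩ := hN (fun A => χ (insert x₀ A)) _ hS'
    obtain ⟨T, hTK, hTcard, hT⟩ := hM χ K hKcard
    have hx₀T : x₀ ∉ T := fun h => by simpa using hKS (hTK h)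
    have hlt : ∀ y ∈ T, x₀ < y := fun y hy => S.min'_lt_of_mem_erase_min' hSne (hKS (hTK hy))
    have hsub : ∀ {x A}, x₀ ≤ x → A ⊆ insert x₀ T → (∀ a ∈ A, x < a) → A ⊆ T := by
      intro x A hx hA hxA a ha
      exact (mem_insert.mp (hA ha)).resolve_left (fun h => by have := hxA a ha; order)
    refine ⟨insert x₀ T, insert_subset (S.min'_mem hSne) (hTK.trans (hKS.trans (erase_subset _ _))),
      by rw [card_insert_of_notMem hx₀T]; omega, ?_⟩
    intro x hx A hA B hB hAr hBr hxA hxB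
    rcases mem_insert.mp hx with rfl | hx
    · exact (hc A ((hsub le_rfl hA hxA).trans hTK) hAr).trans
        (hc B ((hsub le_rfl hB hxB).trans hTK) hBr).symm
    · exact hT x hx A (hsub (hlt x hx).le hA hxA) B (hsub (hlt x hx).le hB hxB) hAr hBr hxA hxB

lemma hasRamseyBound_succ [Fintype C] {r s N : ℕ}
    (hN : ∀ {α : Type} [LinearOrder α] (χ : Finset α → C) (S : Finset α), N ≤ S.card →
      ∃ T ⊆ S, Fintype.card C * s ≤ T.card ∧ IsEndHomogeneous χ r T) :
    HasRamseyBound C (r + 1) s N := by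
  classical
  intro α _ χ S hS
  obtain ⟨T, hTS, hTcard, hT⟩ := hN χ S hS
  -- the colour that `χ` gives to `x` together with any `r` later elements of `T`
  let endColor : α → C := fun x =>
    if h : ∃ A ⊆ T, A.card = r ∧ ∀ a ∈ A, x < a then χ (insert x h.choose) else χ ∅
  obtain ⟨c, -, hc⟩ := exists_le_card_fiber_of_mul_le_card_of_maps_to
    (fun x _ => mem_univ (endColor x)) (univ_nonempty_iff.mpr ⟨χ ∅⟩)
    (by rwa [card_univ] : (univ : Finset C).card * s ≤ T.card)
  refine ⟨T.filter (endColor · = c), (filter_subset _ _).trans hTS, hc, c, fun B hB hBr => ?_⟩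
  have hBne : B.Nonempty := card_pos.mp (by omega)
  set x := B.min' hBne
  have hxK := hB (B.min'_mem hBne)
  have hA : B.erase x ⊆ T ∧ (B.erase x).card = r ∧ ∀ a ∈ B.erase x, x < a :=
    ⟨(erase_subset _ _).trans (hB.trans (filter_subset _ _)),
      by rw [card_erase_of_mem (B.min'_mem hBne)]; omega,
      fun a ha => B.min'_lt_of_mem_erase_min' hBne ha⟩
  have hex : ∃ A ⊆ T, A.card = r ∧ ∀ a ∈ A, x < a := ⟨_, hA⟩
  have hspec := hex.choose_spec
  calc χ B = χ (insert x (B.erase x)) := by rw [insert_erase (B.min'_mem hBne)]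
    _ = χ (insert x hex.choose) :=
        hT x (mem_filter.mp hxK).1 _ hA.1 _ hspec.1 hA.2.1 hspec.2.1 hA.2.2 hspec.2.2
    _ = endColor x := by simp only [endColor, dif_pos hex]
    _ = c := (mem_filter.mp hxK).2

theorem exists_hasRamseyBound [Fintype C] (r s : ℕ) : ∃ N, HasRamseyBound C r s N := by
  induction r generalizing s with
  | zero =>
    refine ⟨s, fun χ S hS => ⟨S, subset_rfl, hS, χ ∅, fun B _ hB => ?_⟩⟩
    rw [card_eq_zero.mp hB]
  | succ r ih =>
    obtain ⟨N, hN⟩ := exists_isEndHomogeneous ih (Fintype.card C * s)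
    exact ⟨N, hasRamseyBound_succ hN⟩

end Ramsey

theorem exists_ramseyProp {q : ℕ} (Gs : Fin q → ThreeGraph) : ∃ N, RamseyProp Gs N := by
  -- one spare vertex makes `Fin N` nonempty
  obtain ⟨N, hN⟩ :=
    exists_hasRamseyBound (C := Fin q) 3 (univ.sup (fun i => (Gs i).verts.card) + 1)
  refine ⟨N, fun χ => ?_⟩
  obtain ⟨K, -, hK, c, hc⟩ := hN χ univ (by simp)
  have hVK : (Gs c).verts.card < K.card := by
    have := le_sup (f := fun i => (Gs i).verts.card) (mem_univ c)
    omega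
  have : Nonempty (Fin N) := ⟨(card_pos.mp (by omega : 0 < K.card)).choose⟩
  obtain ⟨f, hfK, hf⟩ := (Gs c).verts.finite_toSet.exists_injOn_of_encard_le
    (t := (K : Set (Fin N)))
    (by simpa only [Set.encard_coe_eq_coe_finsetCard, Nat.cast_le] using hVK.le)
  refine ⟨c, f, hf, fun e he => hc _ (fun y hy => ?_) ?_⟩
  · obtain ⟨u, hu, rfl⟩ := mem_image.mp hy
    exact hfK ((Gs c).edge_sub e he hu)
  · rw [card_image_of_injOn (hf.mono (coe_subset.mpr ((Gs c).edge_sub e he))),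
      (Gs c).edge_card e he]

theorem not_ramseyProp_of_le {q t N : ℕ} (hq : 0 < q) (htq : 2 * t ≤ q) (hN : N ≤ 2 ^ 2 ^ t)
    {G : ThreeGraph} (hG : ¬InU G) : ¬RamseyProp (fun _ : Fin q => G) N := by
  intro hR
  obtain ⟨i, f, hf, hcol⟩ :=
    hR fun T => ⟨stepUpColor t (T.image Fin.val) % q, Nat.mod_lt _ hq⟩
  have hℓ : Set.InjOn (fun u => (f u : ℕ)) G.verts := Fin.val_injective.comp_injOn hf
  refine hG (isUClass_colorClass t i G _ hℓ fun e he => ?_)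
  have hcard : (e.image fun u => (f u : ℕ)).card = 3 := by
    rw [card_image_of_injOn (hℓ.mono (coe_subset.mpr (G.edge_sub e he))), G.edge_card e he]
  have hrange : e.image (fun u => (f u : ℕ)) ⊆ range (2 ^ 2 ^ t) := fun x hx => by
    obtain ⟨u, -, rfl⟩ := mem_image.mp hx
    exact mem_range.mpr ((f u).isLt.trans_le hN)
  have hlt : stepUpColor t (e.image fun u => (f u : ℕ)) < q := by
    by_contra hge
    exact (colorClass_eq_empty (k := t) (by omega)).subset ⟨hcard, hrange, rfl⟩
  have := congrArg Fin.val (hcol e he)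
  simp only [image_image, Function.comp_def, Nat.mod_eq_of_lt hlt] at this
  exact ⟨hcard, hrange, this⟩

theorem stmt5_general (q : ℕ) (hq : 2 ≤ q) (G : ThreeGraph) (hG : ¬ InU G) :
    2 ^ 2 ^ (q / 2) < rq G q :=
  le_csInf (exists_ramseyProp _) fun _ hN =>
    not_le.mp fun hle => not_ramseyProp_of_le (by omega) (Nat.mul_div_le q 2) hle hG hN

/-- For every even `q ≥ 2` and every 3-uniform hypergraph `G` not in `𝒰`,
`r(G; q) > 2 ^ (2 ^ (q/2))`. -/
theorem stmt5 (q : ℕ) (hq : 2 ≤ q) (hev : Even q) (G : ThreeGraph) (hG : ¬ InU G) :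
    2 ^ 2 ^ (q / 2) < rq G q :=
  stmt5_general q hq G hG
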